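/- Let T be a TBox (a finite set of inclusion and functionality assertions) and let I1, I2 be interpretations with disjoint support sets. Then I1 ⊎ I2 is a model of T if and only if I1 and I2 are both models of T. -/

import Mathlib

namespace DLLite

/-- The countably infinite domain of constants. -/
abbrev Δ : Type := ℕ
/-- Countably infinite set of concept names. -/
abbrev ConceptName : Type := ℕ
/-- Countably infinite set of role names. -/
abbrev RoleName : Type := ℕ

/-- An interpretation assigns a set of domain elements to each concept name
and a binary relation to each role name; constants are interpreted as themselves. -/
structure Interp where
  concept : ConceptName → Set Δ
  role : RoleName → Set (Δ × Δ)

/-- Basic roles: `P` or `P⁻`. -/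
inductive BasicRole where
  | pos (P : RoleName)
  | inv (P : RoleName)
deriving DecidableEq

def BasicRole.interp (R : BasicRole) (I : Interp) : Set (Δ × Δ) :=
  match R with
  | .pos P => I.role P
  | .inv P => {p | (p.2, p.1) ∈ I.role P}

/-- Basic concepts: `A` or `∃R`. -/
inductive BasicConcept where
  | atom (A : ConceptName)
  | ex (R : BasicRole)
deriving DecidableEq

def BasicConcept.interp (B : BasicConcept) (I : Interp) : Set Δ :=
  match B with
  | .atom A => I.concept A
  | .ex R => {o | ∃ o', (o, o') ∈ R.interp I}

/-- DL-Lite_FR assertions: (negative) concept/role inclusions, functionality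
assertions, and membership assertions. -/
inductive Assertion where
  | conceptIncl (B1 B2 : BasicConcept)
  | conceptDisj (B1 B2 : BasicConcept)
  | roleIncl (R1 R2 : BasicRole)
  | roleDisj (R1 R2 : BasicRole)
  | funct (R : BasicRole)
  | memberC (A : ConceptName) (a : Δ)
  | memberR (P : RoleName) (a b : Δ)
deriving DecidableEq

/-- Satisfaction of an assertion by an interpretation. -/
def Interp.sat (I : Interp) : Assertion → Prop
  | .conceptIncl B1 B2 => B1.interp I ⊆ B2.interp I
  | .conceptDisj B1 B2 => B1.interp I ∩ B2.interp I = ∅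
  | .roleIncl R1 R2 => R1.interp I ⊆ R2.interp I
  | .roleDisj R1 R2 => R1.interp I ∩ R2.interp I = ∅
  | .funct R => ∀ o o1 o2, (o, o1) ∈ R.interp I → (o, o2) ∈ R.interp I → o1 = o2
  | .memberC A a => a ∈ I.concept A
  | .memberR P a b => (a, b) ∈ I.role P

/-- TBox assertions: inclusion or functionality assertions. -/
def Assertion.isTBox : Assertion → Prop
  | .memberC _ _ => False
  | .memberR _ _ _ => False
  | _ => True

/-- Membership (ABox) assertions. -/
def Assertion.isMembership : Assertion → Prop
  | .memberC _ _ => True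
  | .memberR _ _ _ => True
  | _ => False

/-- The constants occurring in an assertion. -/
def Assertion.constants : Assertion → Set Δ
  | .memberC _ a => {a}
  | .memberR _ a b => {a, b}
  | _ => ∅

/-- A knowledge base: a finite set of assertions (TBox ∪ ABox). -/
abbrev KB := Finset Assertion

/-- The set of models of a KB. -/
def Mod (K : KB) : Set Interp := {I | ∀ a ∈ K, I.sat a}

/-- Interpretations falsifying at least one assertion of `K`. -/
def NonMod (K : KB) : Set Interp := {I | ∃ a ∈ K, ¬ I.sat a}

/-- The constants occurring in a KB. -/
def KB.constants (K : KB) : Set Δ := ⋃ a ∈ K, Assertion.constants a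

/-- Atoms: ground facts `A(o)` or `P(o,o')`. -/
inductive Atom where
  | c (A : ConceptName) (o : Δ)
  | r (P : RoleName) (o o' : Δ)
deriving DecidableEq

/-- The atom set of an interpretation. -/
def Interp.atoms (I : Interp) : Set Atom :=
  fun a => match a with
  | .c A o => o ∈ I.concept A
  | .r P o o' => (o, o') ∈ I.role P

/-- Concept or role names (symbols). -/
inductive SName where
  | c (A : ConceptName)
  | r (P : RoleName)
deriving DecidableEq

/-- Atom-based set distance: symmetric difference of atom sets. -/
def distASub (I J : Interp) : Set Atom := symmDiff I.atoms J.atoms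
/-- Atom-based cardinality distance. -/
noncomputable def distACard (I J : Interp) : ℕ∞ := (symmDiff I.atoms J.atoms).encard
/-- Symbol-based set distance: names interpreted differently. -/
def distSSub (I J : Interp) : Set SName :=
  fun n => match n with
  | .c A => I.concept A ≠ J.concept A
  | .r P => I.role P ≠ J.role P
/-- Symbol-based cardinality distance. -/
noncomputable def distSCard (I J : Interp) : ℕ∞ := (distSSub I J).encard

/-- Global expansion w.r.t. a distance. -/
def expGlobD {D : Type} [PartialOrder D] (dist : Interp → Interp → D)
    (M N : Set Interp) : Set Interp :=
  {J | J ∈ N ∧ ∃ I ∈ M, ∀ I' ∈ M, ∀ J' ∈ N, ¬ dist I' J' < dist I J}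

/-- Local expansion w.r.t. a distance. -/
def expLocD {D : Type} [PartialOrder D] (dist : Interp → Interp → D)
    (M N : Set Interp) : Set Interp :=
  {J | J ∈ N ∧ ∃ I ∈ M, ∀ J' ∈ N, ¬ dist I J' < dist I J}

inductive LocKind | glob | loc
inductive MeasKind | atoms | symbols
inductive OrdKind | subset | card

/-- The expansion operator on sets of interpretations for each of the
eight model-based semantics `X^y_z`. -/
def expansionSet : LocKind → MeasKind → OrdKind → Set Interp → Set Interp → Set Interp
  | .glob, .atoms, .subset => expGlobD distASub
  | .glob, .atoms, .card => expGlobD distACard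
  | .glob, .symbols, .subset => expGlobD distSSub
  | .glob, .symbols, .card => expGlobD distSCard
  | .loc, .atoms, .subset => expLocD distASub
  | .loc, .atoms, .card => expLocD distACard
  | .loc, .symbols, .subset => expLocD distSSub
  | .loc, .symbols, .card => expLocD distSCard

/-- KB expansion `K ⊕ N` under semantics `X^y_z`. -/
def expandKB (X : LocKind) (y : MeasKind) (z : OrdKind) (K N : KB) : Set Interp :=
  expansionSet X y z (Mod K) (Mod N)

/-- KB contraction `K ⊖ N` under semantics `X^y_z`. -/
def contractKB (X : LocKind) (y : MeasKind) (z : OrdKind) (K N : KB) : Set Interp :=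
  Mod K ∪ expansionSet X y z (Mod K) (NonMod N)

/-- Union of two interpretations. -/
def Interp.union (I1 I2 : Interp) : Interp :=
  ⟨fun A => I1.concept A ∪ I2.concept A, fun P => I1.role P ∪ I2.role P⟩

/-- The support set of an interpretation. -/
def Interp.support (I : Interp) : Set Δ :=
  (⋃ A, I.concept A) ∪ (⋃ P, {o | ∃ o', (o, o') ∈ I.role P ∨ (o', o) ∈ I.role P})

/-- The image `I^f` of an interpretation under an (injective) map `f`. -/
def Interp.image (I : Interp) (f : Δ → Δ) : Interp :=
  ⟨fun A => f '' I.concept A, fun P => (fun p => (f p.1, f p.2)) '' I.role P⟩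

/-- `h` is a homomorphism from `I` to `J`. -/
def IsHom (h : Δ → Δ) (I J : Interp) : Prop :=
  (∀ A, h '' I.concept A ⊆ J.concept A) ∧
  (∀ P o o', (o, o') ∈ I.role P → (h o, h o') ∈ J.role P)

end DLLite

/-!
Concept extensions and the first components of role extensions of an interpretation lie in its
support. So for disjoint supports no element (and no first component of a role pair) is shared
between `I1` and `I2`, while every TBox assertion only relates extensions at a common element
(functionality: pairs with a common first component). Hence each assertion holds in `I1 ⊎ I2`
exactly when it holds in `I1` and in `I2`.
-/

theorem Set.union_subset_union_iff_of_disjoint {α : Type*} {s₁ s₂ t₁ t₂ : Set α}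
    (h₁ : Disjoint s₁ t₂) (h₂ : Disjoint s₂ t₁) :
    s₁ ∪ s₂ ⊆ t₁ ∪ t₂ ↔ s₁ ⊆ t₁ ∧ s₂ ⊆ t₂ := by
  refine ⟨fun h => ⟨fun x hx => ?_, fun x hx => ?_⟩,
    fun h => Set.union_subset_union h.1 h.2⟩
  · exact (h (Or.inl hx)).resolve_right (Set.disjoint_left.1 h₁ hx)
  · exact (h (Or.inr hx)).resolve_left (Set.disjoint_left.1 h₂ hx)

theorem Set.disjoint_union_union_iff_of_disjoint {α : Type*} {s₁ s₂ t₁ t₂ : Set α}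
    (h₁ : Disjoint s₁ t₂) (h₂ : Disjoint s₂ t₁) :
    Disjoint (s₁ ∪ s₂) (t₁ ∪ t₂) ↔ Disjoint s₁ t₁ ∧ Disjoint s₂ t₂ := by
  simp only [Set.disjoint_union_left, Set.disjoint_union_right, h₁, h₂, and_true, true_and]

namespace DLLite

variable {I I₁ I₂ : Interp}

theorem BasicRole.fst_mem_support {R : BasicRole} {p : Δ × Δ} (h : p ∈ R.interp I) :
    p.1 ∈ I.support := by
  cases R with
  | pos P => exact Or.inr (Set.mem_iUnion.2 ⟨P, p.2, Or.inl h⟩)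
  | inv P => exact Or.inr (Set.mem_iUnion.2 ⟨P, p.2, Or.inr h⟩)

theorem BasicConcept.interp_subset_support (B : BasicConcept) : B.interp I ⊆ I.support := by
  cases B with
  | atom A => exact fun _ h => Or.inl (Set.mem_iUnion.2 ⟨A, h⟩)
  | ex R => exact fun _ ⟨o', h⟩ => BasicRole.fst_mem_support (p := (_, o')) h

theorem BasicRole.interp_union (R : BasicRole) :
    R.interp (I₁.union I₂) = R.interp I₁ ∪ R.interp I₂ := by
  cases R <;> rfl

theorem BasicConcept.interp_union (B : BasicConcept) :
    B.interp (I₁.union I₂) = B.interp I₁ ∪ B.interp I₂ := by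
  cases B with
  | atom A => rfl
  | ex R =>
    ext o
    simp only [BasicConcept.interp, BasicRole.interp_union, Set.mem_union, Set.mem_ofPred_eq,
      exists_or]

theorem BasicRole.fst_ne_of_disjoint_support (h : Disjoint I₁.support I₂.support)
    {R R' : BasicRole} {p q : Δ × Δ} (hp : p ∈ R.interp I₁) (hq : q ∈ R'.interp I₂) :
    p.1 ≠ q.1 :=
  h.ne_of_mem (BasicRole.fst_mem_support hp) (BasicRole.fst_mem_support hq)

theorem BasicRole.disjoint_interp_of_disjoint_support (h : Disjoint I₁.support I₂.support)
    (R R' : BasicRole) :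
    Disjoint (R.interp I₁) (R'.interp I₂) :=
  Set.disjoint_left.2 fun _ hp hq => BasicRole.fst_ne_of_disjoint_support h hp hq rfl

theorem BasicConcept.disjoint_interp_of_disjoint_support (h : Disjoint I₁.support I₂.support)
    (B B' : BasicConcept) :
    Disjoint (B.interp I₁) (B'.interp I₂) :=
  h.mono B.interp_subset_support B'.interp_subset_support

theorem Interp.sat_funct_iff {R : BasicRole} :
    I.sat (.funct R) ↔ Set.InjOn Prod.fst (R.interp I) :=
  ⟨fun h p hp q hq hpq => Prod.ext hpq (h p.1 p.2 q.2 hp (hpq ▸ hq)),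
    fun h _ _ _ h₁ h₂ => congrArg Prod.snd (h h₁ h₂ rfl)⟩

theorem Interp.sat_union_iff (h : Disjoint I₁.support I₂.support) {a : Assertion}
    (ha : a.isTBox) : (I₁.union I₂).sat a ↔ I₁.sat a ∧ I₂.sat a := by
  have hB := BasicConcept.disjoint_interp_of_disjoint_support h
  have hB' := BasicConcept.disjoint_interp_of_disjoint_support h.symm
  have hR := BasicRole.disjoint_interp_of_disjoint_support h
  have hR' := BasicRole.disjoint_interp_of_disjoint_support h.symm
  cases a with
  | conceptIncl B₁ B₂ =>
    simp only [Interp.sat, BasicConcept.interp_union]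
    exact Set.union_subset_union_iff_of_disjoint (hB B₁ B₂) (hB' B₁ B₂)
  | conceptDisj B₁ B₂ =>
    simp only [Interp.sat, BasicConcept.interp_union, ← Set.disjoint_iff_inter_eq_empty]
    exact Set.disjoint_union_union_iff_of_disjoint (hB B₁ B₂) (hB' B₁ B₂)
  | roleIncl R₁ R₂ =>
    simp only [Interp.sat, BasicRole.interp_union]
    exact Set.union_subset_union_iff_of_disjoint (hR R₁ R₂) (hR' R₁ R₂)
  | roleDisj R₁ R₂ =>
    simp only [Interp.sat, BasicRole.interp_union, ← Set.disjoint_iff_inter_eq_empty]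
    exact Set.disjoint_union_union_iff_of_disjoint (hR R₁ R₂) (hR' R₁ R₂)
  | funct R =>
    simp only [Interp.sat_funct_iff, BasicRole.interp_union, Set.injOn_union (hR R R)]
    exact and_congr_right' <| and_iff_left fun _ hp _ hq =>
      BasicRole.fst_ne_of_disjoint_support h hp hq
  | memberC | memberR => exact ha.elim

/-- For a TBox `T` and interpretations with disjoint support sets:
`I1 ⊎ I2` is a model of `T` iff both `I1` and `I2` are models of `T`. -/
theorem disjoint_union_model_tbox (T : KB) (hT : ∀ a ∈ T, a.isTBox)
    (I1 I2 : Interp) (hdisj : Disjoint I1.support I2.support) :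
    I1.union I2 ∈ Mod T ↔ I1 ∈ Mod T ∧ I2 ∈ Mod T := by
  simp only [Mod, Set.mem_ofPred_eq, ← forall₂_and]
  exact forall₂_congr fun a ha => Interp.sat_union_iff hdisj (hT a ha)

end DLLite
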